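/- For the uniform distribution on the unit circle with M-level dithered quantization in the angular domain (unlimited common randomness, N → ∞), the achievable distortion under perfect perception (P = 0) is E[‖X − X̂‖²] = 2 − 2M sin(π/M)/π, which is strictly smaller than the value 2 − 2M² sin²(π/M)/π² achievable with no common randomness, for every integer M ≥ 2. -/

import Mathlib

open MeasureTheory ProbabilityTheory Real

/-- The point of the unit circle in `ℝ²` at angle `θ`. -/
noncomputable def pt (θ : ℝ) : EuclideanSpace ℝ (Fin 2) :=
  (WithLp.equiv 2 (Fin 2 → ℝ)).symm ![Real.cos θ, Real.sin θ]

/-- Uniform probability measure on the interval `[a, b)`. -/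
noncomputable def unifIco (a b : ℝ) : Measure ℝ :=
  (ENNReal.ofReal (b - a))⁻¹ • volume.restrict (Set.Ico a b)

/-- Joint law of the source angle `Θ` (uniform on `[0, 2π)`) and an independent dither `U`
uniform on `[0, 2π/M)` (the unlimited-common-randomness limit `N → ∞`). -/
noncomputable def μ10 (M : ℕ) : Measure (ℝ × ℝ) :=
  (unifIco 0 (2 * π)).prod (unifIco 0 (2 * π / M))

/-- The source `X = (cos Θ, sin Θ)` uniform on the unit circle. -/
noncomputable def X10 (ω : ℝ × ℝ) : EuclideanSpace ℝ (Fin 2) := pt ω.1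

/-- `M`-level dithered quantization in the angular domain: subtract the dither, round to the
grid `(2π/M)ℤ`, and add the dither back; the reconstruction lies on the unit circle. -/
noncomputable def Xh10 (M : ℕ) (ω : ℝ × ℝ) : EuclideanSpace ℝ (Fin 2) :=
  pt ((2 * π / M) * (round ((ω.1 - ω.2) * M / (2 * π)) : ℤ) + ω.2)

/-! Write `h = 2π/M`. The dithered quantizer sends `θ` to `θ - R`, where `R` is the remainder of
`θ - u` modulo `h` taken in `[-h/2, h/2)`; for every fixed `θ`, a uniform dither `u ∈ [0, h)`
makes `R` uniform on `[-h/2, h/2)`, so `(Θ, R)` is a pair of independent uniforms. Perfect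
perception then follows from the translation invariance of the uniform angle `Θ`, and the
distortion is `E[2 - 2 cos R] = 2 - 2 s` with `s = sin(π/M)/(π/M) ∈ (0, 1)`, which beats
`2 - 2 s²` because `s² < s`. -/

open Set Function

@[fun_prop]
lemma continuous_pt : Continuous pt := by
  refine (PiLp.continuous_toLp 2 _).comp (continuous_pi fun i => ?_)
  fin_cases i <;> simp <;> fun_prop

lemma periodic_pt : Periodic pt (2 * π) := fun θ => by
  simp [pt, cos_add_two_pi, sin_add_two_pi]

lemma norm_pt_sub_pt_sq (a b : ℝ) : ‖pt a - pt b‖ ^ 2 = 2 - 2 * cos (a - b) := by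
  rw [EuclideanSpace.norm_eq, sq_sqrt (by positivity), cos_sub]
  simp only [pt, Fin.sum_univ_two, WithLp.equiv_symm_apply, PiLp.sub_apply,
    Matrix.cons_val_zero, Matrix.cons_val_one, norm_eq_abs, sq_abs]
  nlinarith [sin_sq_add_cos_sq a, sin_sq_add_cos_sq b]

@[fun_prop]
lemma measurable_toIcoMod {p : ℝ} (hp : 0 < p) (a : ℝ) : Measurable (toIcoMod hp a) := by
  simp_rw [funext (toIcoMod_eq_add_fract_mul hp a)]
  fun_prop

lemma sub_mul_round_div_eq_toIcoMod {p : ℝ} (hp : 0 < p) (x : ℝ) :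
    x - p * round (x / p) = toIcoMod hp (-(p / 2)) x := by
  rw [← self_sub_toIcoDiv_zsmul, toIcoDiv_eq_floor, round_eq, zsmul_eq_mul, mul_comm]
  congr 4
  field_simp
  ring

lemma isProbabilityMeasure_unifIco {a b : ℝ} (hab : a < b) : IsProbabilityMeasure (unifIco a b) :=
  ⟨by rw [unifIco, Measure.smul_apply, Measure.restrict_apply_univ, Real.volume_Ico, smul_eq_mul,
    ENNReal.inv_mul_cancel (by simpa using hab) ENNReal.ofReal_ne_top]⟩

lemma integral_unifIco {a b : ℝ} (hab : a ≤ b) (f : ℝ → ℝ) :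
    ∫ x, f x ∂unifIco a b = (b - a)⁻¹ * ∫ x in a..b, f x := by
  rw [unifIco, integral_smul_measure, intervalIntegral.integral_of_le hab,
    ← integral_Ico_eq_integral_Ioc, ENNReal.toReal_inv, ENNReal.toReal_ofReal (by linarith),
    smul_eq_mul]

lemma integral_unifIco_comp_sub_of_periodic {a b : ℝ} (hab : a ≤ b) {F : ℝ → ℝ}
    (hF : Periodic F (b - a)) (t : ℝ) :
    ∫ x, F (x - t) ∂unifIco a b = ∫ x, F x ∂unifIco a b := by
  rw [integral_unifIco hab, integral_unifIco hab, intervalIntegral.integral_comp_sub_right,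
    show b - t = a - t + (b - a) by ring, hF.intervalIntegral_add_eq (a - t) a,
    add_sub_cancel]

lemma intervalIntegral_comp_toIcoMod {p : ℝ} (hp : 0 < p) (a c : ℝ) (Φ : ℝ → ℝ) :
    ∫ x in c..c + p, Φ (toIcoMod hp a x) = ∫ x in a..a + p, Φ x := by
  have hper : Periodic (fun x => Φ (toIcoMod hp a x)) p := (toIcoMod_periodic hp a).comp Φ
  rw [hper.intervalIntegral_add_eq c a,
    intervalIntegral.integral_of_le (by linarith), intervalIntegral.integral_of_le (by linarith),
    ← integral_Ico_eq_integral_Ioc, ← integral_Ico_eq_integral_Ioc]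
  exact setIntegral_congr_fun measurableSet_Ico fun x hx => by
    rw [(toIcoMod_eq_self hp).2 hx]

lemma integral_unifIco_comp_toIcoMod_sub {p : ℝ} (hp : 0 < p) (a θ : ℝ) (Φ : ℝ → ℝ) :
    ∫ u, Φ (toIcoMod hp a (θ - u)) ∂unifIco 0 p = ∫ v, Φ v ∂unifIco a (a + p) := by
  rw [integral_unifIco hp.le, integral_unifIco (by linarith),
    intervalIntegral.integral_comp_sub_left (fun x => Φ (toIcoMod hp a x)),
    show θ - 0 = θ - p + p by ring, intervalIntegral_comp_toIcoMod, add_sub_cancel_left, sub_zero]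

lemma integral_prod_unifIco_toIcoMod_sub {p : ℝ} (hp : 0 < p) (a : ℝ) (μ : Measure ℝ)
    [IsFiniteMeasure μ] {G : ℝ → ℝ → ℝ} (hG : Measurable (uncurry G)) {C : ℝ}
    (hC : ∀ x y, ‖G x y‖ ≤ C) :
    ∫ ω, G ω.1 (toIcoMod hp a (ω.1 - ω.2)) ∂μ.prod (unifIco 0 p) =
      ∫ ω, G ω.1 ω.2 ∂μ.prod (unifIco a (a + p)) := by
  have := isProbabilityMeasure_unifIco hp
  have := isProbabilityMeasure_unifIco (show a < a + p by linarith)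
  have hmeas : Measurable fun ω : ℝ × ℝ => G ω.1 (toIcoMod hp a (ω.1 - ω.2)) :=
    hG.comp (measurable_fst.prodMk ((measurable_toIcoMod hp a).comp (by fun_prop)))
  rw [integral_prod _ (.of_bound hmeas.aestronglyMeasurable C (.of_forall fun _ => hC _ _)),
    integral_prod (fun ω => G ω.1 ω.2)
      (.of_bound hG.aestronglyMeasurable C (.of_forall fun _ => hC _ _))]
  exact integral_congr_ae (.of_forall fun θ => integral_unifIco_comp_toIcoMod_sub hp a θ (G θ))

lemma integral_unifIco_two_sub_two_cos {c : ℝ} (hc : 0 < c) :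
    ∫ v, 2 - 2 * cos v ∂unifIco (-c) c = 2 - 2 * sin c / c := by
  rw [integral_unifIco (by linarith), intervalIntegral.integral_sub intervalIntegrable_const
      ((continuous_cos.intervalIntegrable _ _).const_mul 2), intervalIntegral.integral_const,
    intervalIntegral.integral_const_mul, integral_cos, sin_neg, smul_eq_mul]
  field_simp

lemma sin_div_self_pos_lt_one {x : ℝ} (hx0 : 0 < x) (hxπ : x < π) :
    0 < sin x / x ∧ sin x / x < 1 :=
  ⟨div_pos (sin_pos_of_pos_of_lt_pi hx0 hxπ) hx0, (div_lt_one hx0).2 (sin_lt hx0)⟩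

section DitheredQuantizer

variable {M : ℕ}

lemma two_pi_div_natCast_pos (hM : 0 < M) : 0 < 2 * π / M := by positivity

lemma Xh10_eq (hM : 0 < M) (ω : ℝ × ℝ) :
    Xh10 M ω =
      pt (ω.1 - toIcoMod (two_pi_div_natCast_pos hM) (-(2 * π / M / 2)) (ω.1 - ω.2)) := by
  rw [← sub_mul_round_div_eq_toIcoMod, Xh10, div_div_eq_mul_div]
  ring_nf

lemma measurable_X10 : Measurable X10 := continuous_pt.measurable.comp measurable_fst

lemma measurable_Xh10 (hM : 0 < M) : Measurable (Xh10 M) := by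
  rw [funext (Xh10_eq hM)]
  fun_prop

theorem map_Xh10_eq_map_X10 (hM : 0 < M) : (μ10 M).map (Xh10 M) = (μ10 M).map X10 := by
  have hh := two_pi_div_natCast_pos hM
  set a := -(2 * π / M / 2)
  have := isProbabilityMeasure_unifIco two_pi_pos
  have := isProbabilityMeasure_unifIco hh
  have := isProbabilityMeasure_unifIco (show a < a + 2 * π / M by linarith)
  have : IsProbabilityMeasure (μ10 M) := by rw [μ10]; infer_instance
  refine ext_of_forall_integral_eq_of_IsFiniteMeasure fun f => ?_
  have hG : Continuous fun ω : ℝ × ℝ => f (pt (ω.1 - ω.2)) := by fun_prop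
  have hper : Periodic (fun θ => f (pt θ)) (2 * π - 0) := by
    rw [sub_zero]; exact periodic_pt.comp f
  rw [integral_map (measurable_Xh10 hM).aemeasurable f.continuous.aestronglyMeasurable,
    integral_map measurable_X10.aemeasurable f.continuous.aestronglyMeasurable]
  simp only [Xh10_eq hM, X10, μ10]
  rw [integral_prod_unifIco_toIcoMod_sub hh a _ (G := fun θ v => f (pt (θ - v))) hG.measurable
      (C := ‖f‖) fun _ _ => f.norm_coe_le_norm _,
    integral_prod_symm _
      (.of_bound hG.aestronglyMeasurable ‖f‖ (.of_forall fun _ => f.norm_coe_le_norm _)),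
    integral_fun_fst (fun θ => f (pt θ))]
  simp only [integral_unifIco_comp_sub_of_periodic two_pi_pos.le hper, integral_const,
    probReal_univ, one_smul]

theorem integral_norm_X10_sub_Xh10_sq (hM : 0 < M) :
    ∫ ω, ‖X10 ω - Xh10 M ω‖ ^ 2 ∂μ10 M = 2 - 2 * M * sin (π / M) / π := by
  have hh := two_pi_div_natCast_pos hM
  have := isProbabilityMeasure_unifIco two_pi_pos
  have := isProbabilityMeasure_unifIco
    (show -(2 * π / M / 2) < -(2 * π / M / 2) + 2 * π / M by linarith)
  have hbound : ∀ _ v : ℝ, ‖2 - 2 * cos v‖ ≤ 4 := fun _ v => by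
    rw [norm_eq_abs, abs_le]
    constructor <;> linarith [neg_one_le_cos v, cos_le_one v]
  simp only [X10, Xh10_eq hM, norm_pt_sub_pt_sq, sub_sub_cancel, μ10]
  rw [integral_prod_unifIco_toIcoMod_sub hh _ _ (G := fun _ v => 2 - 2 * cos v) (by fun_prop)
      hbound, integral_fun_snd (fun v => 2 - 2 * cos v), probReal_univ, one_smul,
    show -(2 * π / M / 2) + 2 * π / M = π / M by ring, show -(2 * π / M / 2) = -(π / M) by ring,
    integral_unifIco_two_sub_two_cos (by positivity)]
  field_simp

end DitheredQuantizer

/-- With `M`-level dithered quantization in the angular domain (unlimited common randomness),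
the reconstruction is perceptually perfect (`p_X̂ = p_X`) and achieves distortion
`E[‖X − X̂‖²] = 2 − 2M sin(π/M)/π`, which is strictly smaller than the perfect-perception
distortion `2 − 2M² sin²(π/M)/π²` achievable with no common randomness, for every `M ≥ 2`. -/
theorem stmt10 (M : ℕ) (hM : 2 ≤ M) :
    (μ10 M).map (Xh10 M) = (μ10 M).map X10 ∧
    ∫ ω, ‖X10 ω - Xh10 M ω‖ ^ 2 ∂(μ10 M) = 2 - 2 * M * Real.sin (π / M) / π ∧
    2 - 2 * M * Real.sin (π / M) / π < 2 - 2 * M ^ 2 * Real.sin (π / M) ^ 2 / π ^ 2 := by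
  have hM0 : 0 < M := by omega
  refine ⟨map_Xh10_eq_map_X10 hM0, integral_norm_X10_sub_Xh10_sq hM0, ?_⟩
  have hx : π / M < π := div_lt_self pi_pos (by exact_mod_cast hM)
  obtain ⟨hs0, hs1⟩ := sin_div_self_pos_lt_one (by positivity) hx
  have hsinc : (M : ℝ) * sin (π / M) / π = sin (π / M) / (π / M) := by field_simp
  calc 2 - 2 * M * sin (π / M) / π = 2 - 2 * (sin (π / M) / (π / M)) := by
        rw [mul_assoc, mul_div_assoc, hsinc]
    _ < 2 - 2 * (sin (π / M) / (π / M)) ^ 2 := by nlinarith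
    _ = 2 - 2 * M ^ 2 * sin (π / M) ^ 2 / π ^ 2 := by rw [← hsinc]; ring
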